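/- arXiv:2209.04906 — 2 statements merged into one kernel-verified Lean document; each statement's English description precedes it below -/
import Mathlib

section
/- Let V be a real Hilbert space, K ⊆ V nonempty closed convex, a : V × V → ℝ a continuous, symmetric, coercive bilinear form, and L ∈ V*. Then there exists a unique u ∈ K such that a(u, v − u) ≥ L(v − u) for all v ∈ K (Lions–Stampacchia theorem). -/
/-!
By the Riesz representation, `a u w = ⟪A u, w⟫` and `L w = ⟪l, w⟫`, and the variational
inequality at `u` says exactly that `u` is the metric projection onto `K` of `u - ρ • (A u - l)`,
for any `ρ > 0`. The projection is `1`-Lipschitz and coercivity makes `id - ρ • A` a strict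
contraction for small `ρ > 0`, so Banach's fixed point theorem yields a solution. Two solutions
`u₁, u₂` satisfy `a (u₁ - u₂) (u₁ - u₂) ≤ 0`, hence coincide.
-/

open RealInnerProductSpace InnerProductSpace

section ProjectionContraction

variable {F : Type*} [NormedAddCommGroup F] [InnerProductSpace ℝ F]

theorem norm_sub_le_of_inner_le_zero {x y p q : F} (hp : ⟪x - p, q - p⟫ ≤ 0)
    (hq : ⟪y - q, p - q⟫ ≤ 0) : ‖p - q‖ ≤ ‖x - y‖ := by
  have key : ‖p - q‖ ^ 2 ≤ ‖x - y‖ * ‖p - q‖ :=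
    calc ‖p - q‖ ^ 2 ≤ ⟪x - p, p - q⟫ + ⟪y - q, q - p⟫ + ‖p - q‖ ^ 2 := by
          rw [← neg_sub p q, inner_neg_right] at hp
          rw [← neg_sub q p, inner_neg_right] at hq
          linarith
      _ = ⟪x - y, p - q⟫ := by
          rw [← real_inner_self_eq_norm_sq, ← neg_sub p q, inner_neg_right, ← sub_eq_add_neg,
            ← inner_sub_left, ← inner_add_left]
          congr 1; abel
      _ ≤ ‖x - y‖ * ‖p - q‖ := real_inner_le_norm _ _
  rcases (norm_nonneg (p - q)).eq_or_lt with h | h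
  · rw [← h]; exact norm_nonneg _
  · nlinarith

theorem exists_lipschitz_proj_of_complete_convex {K : Set F} (hne : K.Nonempty)
    (hK : IsComplete K) (hconv : Convex ℝ K) :
    ∃ P : F → F, LipschitzWith 1 P ∧ ∀ x, P x ∈ K ∧ ∀ w ∈ K, ⟪x - P x, w - P x⟫ ≤ 0 := by
  choose P hPK hPmin using exists_norm_eq_iInf_of_complete_convex hne hK hconv
  have hP x : ∀ w ∈ K, ⟪x - P x, w - P x⟫ ≤ 0 :=
    (norm_eq_iInf_iff_real_inner_le_zero hconv (hPK x)).1 (hPmin x)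
  refine ⟨P, LipschitzWith.of_dist_le_mul fun x y => ?_, fun x => ⟨hPK x, hP x⟩⟩
  simpa [dist_eq_norm] using
    norm_sub_le_of_inner_le_zero (hP x (P y) (hPK y)) (hP y (P x) (hPK x))

theorem norm_sub_smul_sq_le {A : F →L[ℝ] F} {α ρ : ℝ} (hA : ∀ z, α * ‖z‖ * ‖z‖ ≤ ⟪A z, z⟫)
    (hρ : 0 ≤ ρ) (hρA : ρ * ‖A‖ ^ 2 ≤ α) (z : F) :
    ‖z - ρ • A z‖ ^ 2 ≤ (1 - ρ * α) * ‖z‖ ^ 2 := by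
  have hAz : ‖A z‖ ^ 2 ≤ ‖A‖ ^ 2 * ‖z‖ ^ 2 := by
    rw [← mul_pow]; gcongr; exact A.le_opNorm z
  have hcoer := hA z
  rw [norm_sub_sq_real, real_inner_smul_right, real_inner_comm, norm_smul, mul_pow,
    Real.norm_eq_abs, sq_abs]
  nlinarith [mul_le_mul_of_nonneg_left hAz (sq_nonneg ρ), mul_le_mul_of_nonneg_right hρA
    (mul_nonneg hρ (sq_nonneg ‖z‖))]

theorem exists_pos_opNorm_id_sub_smul_lt_one {A : F →L[ℝ] F} {α : ℝ} (hα : 0 < α)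
    (hA : ∀ z, α * ‖z‖ * ‖z‖ ≤ ⟪A z, z⟫) :
    ∃ ρ : ℝ, 0 < ρ ∧ ‖ContinuousLinearMap.id ℝ F - ρ • A‖ < 1 := by
  set ρ := α / (‖A‖ ^ 2 + 1)
  have hρ : 0 < ρ := by positivity
  have hρA : ρ * ‖A‖ ^ 2 ≤ α := by
    rw [div_mul_eq_mul_div, div_le_iff₀ (by positivity)]; nlinarith
  have hbound : ‖ContinuousLinearMap.id ℝ F - ρ • A‖ ≤ √(1 - ρ * α) := by
    refine ContinuousLinearMap.opNorm_le_bound _ (Real.sqrt_nonneg _) fun z => ?_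
    rw [← Real.sqrt_sq (norm_nonneg z), ← Real.sqrt_mul' _ (sq_nonneg _),
      ← Real.sqrt_sq (norm_nonneg _)]
    exact Real.sqrt_le_sqrt (norm_sub_smul_sq_le hA hρ.le hρA z)
  refine ⟨ρ, hρ, hbound.trans_lt ?_⟩
  rw [Real.sqrt_lt' one_pos]; nlinarith

end ProjectionContraction

section Stampacchia

variable {V : Type*} [NormedAddCommGroup V] [InnerProductSpace ℝ V] {K : Set V}
  {a : V →L[ℝ] V →L[ℝ] ℝ} {L : V →L[ℝ] ℝ}

theorem eq_of_variational_inequality (ha : IsCoercive a) {u₁ u₂ : V}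
    (hu₁ : u₁ ∈ K ∧ ∀ v ∈ K, L (v - u₁) ≤ a u₁ (v - u₁))
    (hu₂ : u₂ ∈ K ∧ ∀ v ∈ K, L (v - u₂) ≤ a u₂ (v - u₂)) : u₁ = u₂ := by
  obtain ⟨C, hC, hcoer⟩ := ha
  have h₁ := hu₁.2 u₂ hu₂.1
  have h₂ := hu₂.2 u₁ hu₁.1
  have hnonpos : a (u₁ - u₂) (u₁ - u₂) ≤ 0 := by
    simp only [map_sub, sub_apply] at h₁ h₂ ⊢
    linarith
  have hsq : C * ‖u₁ - u₂‖ * ‖u₁ - u₂‖ ≤ 0 := (hcoer _).trans hnonpos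
  rcases (norm_nonneg (u₁ - u₂)).eq_or_lt with h | h
  · exact sub_eq_zero.1 (norm_eq_zero.1 h.symm)
  · exact absurd hsq (not_le.2 (by positivity))

theorem exists_variational_inequality [CompleteSpace V] (hne : K.Nonempty) (hcl : IsClosed K)
    (hconv : Convex ℝ K) (ha : IsCoercive a) :
    ∃ u ∈ K, ∀ v ∈ K, L (v - u) ≤ a u (v - u) := by
  obtain ⟨α, hα, hcoer⟩ := ha
  set A := continuousLinearMapOfBilin (𝕜 := ℝ) a
  have hA z : α * ‖z‖ * ‖z‖ ≤ ⟪A z, z⟫ := by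
    rw [continuousLinearMapOfBilin_apply]; exact hcoer z
  obtain ⟨ρ, hρ, hcontr⟩ := exists_pos_opNorm_id_sub_smul_lt_one hα hA
  obtain ⟨P, hPlip, hP⟩ := exists_lipschitz_proj_of_complete_convex hne hcl.isComplete hconv
  set l := (toDual ℝ V).symm L
  set B := ContinuousLinearMap.id ℝ V - ρ • A
  have hT : ContractingWith ‖B‖₊ fun x => P (B x + ρ • l) := by
    have hlip := hPlip.comp (B.lipschitz.add (LipschitzWith.const (ρ • l)))
    rw [one_mul, add_zero] at hlip
    exact ⟨hcontr, hlip⟩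
  set u := hT.fixedPoint
  have hu : P (u - ρ • (A u - l)) = u := by
    have hfix : P (B u + ρ • l) = u := hT.fixedPoint_isFixedPt
    rwa [show B u + ρ • l = u - ρ • (A u - l) by simp [B]; module] at hfix
  refine ⟨u, hu ▸ (hP _).1, fun v hv => ?_⟩
  have hproj := (hP (u - ρ • (A u - l))).2 v hv
  rw [hu, sub_sub_cancel_left, inner_neg_left, real_inner_smul_left, inner_sub_left,
    continuousLinearMapOfBilin_apply, toDual_symm_apply] at hproj
  nlinarith

theorem existsUnique_variational_inequality [CompleteSpace V] (hne : K.Nonempty)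
    (hcl : IsClosed K) (hconv : Convex ℝ K) (ha : IsCoercive a) :
    ∃! u, u ∈ K ∧ ∀ v ∈ K, L (v - u) ≤ a u (v - u) :=
  let ⟨u, huK, hu⟩ := exists_variational_inequality hne hcl hconv ha
  ⟨u, ⟨huK, hu⟩, fun _ hw => eq_of_variational_inequality ha hw ⟨huK, hu⟩⟩

end Stampacchia

theorem stmt_15_general {V : Type*} [NormedAddCommGroup V] [InnerProductSpace ℝ V] [CompleteSpace V]
    (K : Set V) (hKne : K.Nonempty) (hKcl : IsClosed K) (hKconv : Convex ℝ K)
    (a : V →L[ℝ] V →L[ℝ] ℝ)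
    (α : ℝ) (hα : 0 < α) (hcoer : ∀ v : V, α * ‖v‖ ^ 2 ≤ a v v)
    (L : V →L[ℝ] ℝ) :
    ∃! u : V, u ∈ K ∧ ∀ v ∈ K, L (v - u) ≤ a u (v - u) :=
  existsUnique_variational_inequality hKne hKcl hKconv
    ⟨α, hα, fun v => by rw [mul_assoc, ← sq]; exact hcoer v⟩

theorem stmt_15 {V : Type*} [NormedAddCommGroup V] [InnerProductSpace ℝ V] [CompleteSpace V]
    (K : Set V) (hKne : K.Nonempty) (hKcl : IsClosed K) (hKconv : Convex ℝ K)
    (a : V →L[ℝ] V →L[ℝ] ℝ)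
    (hsymm : ∀ w v : V, a w v = a v w)
    (M : ℝ) (hbdd : ∀ w v : V, |a w v| ≤ M * ‖w‖ * ‖v‖)
    (α : ℝ) (hα : 0 < α) (hcoer : ∀ v : V, α * ‖v‖ ^ 2 ≤ a v v)
    (L : V →L[ℝ] ℝ) :
    ∃! u : V, u ∈ K ∧ ∀ v ∈ K, L (v - u) ≤ a u (v - u) :=
  stmt_15_general K hKne hKcl hKconv a α hα hcoer L
end

section
/- Let V be a real vector space, a bilinear form on V, L linear, K = {v ∈ V : T v(p) ≤ 0 ∀ p ∈ P} where T : V → (P → ℝ) is linear and P is a finite set. Let uʰ ∈ K solve a(uʰ, vʰ − uʰ) ≥ L(vʰ − uʰ) for all vʰ ∈ K. Fix p ∈ P with T uʰ(p) < 0, and let ψ ∈ V satisfy T ψ(q) = (if q = p then 1 else 0). Then a(uʰ, ψ) = L(ψ). -/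
theorem stmt_17 {V : Type*} [AddCommGroup V] [Module ℝ V]
    {P : Type*} [Fintype P] [DecidableEq P]
    (T : V →ₗ[ℝ] (P → ℝ))
    (K : Set V) (hK : K = {v : V | ∀ p : P, T v p ≤ 0})
    (a : V →ₗ[ℝ] V →ₗ[ℝ] ℝ) (L : V →ₗ[ℝ] ℝ)
    (uh : V) (huh : uh ∈ K)
    (hVI : ∀ vh ∈ K, L (vh - uh) ≤ a uh (vh - uh))
    (p : P) (hp : T uh p < 0)
    (ψ : V) (hψ : ∀ q : P, T ψ q = if q = p then 1 else 0) :
    a uh ψ = L ψ := by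
  subst hK
  set κ : ℝ := -(T uh p) with hκ
  have hκpos : 0 < κ := by simp [hκ]; linarith
  have hTψ : ∀ q, T (κ • ψ) q = if q = p then κ else 0 := by
    intro q
    simp [hψ q, mul_ite]
  have hmem₁ : uh + κ • ψ ∈ {v : V | ∀ q : P, T v q ≤ 0} := by
    intro q
    have := huh q
    simp only [map_add, Pi.add_apply, hTψ q]
    split
    · next h => subst h; simp [hκ]
    · simpa
  have hmem₂ : uh - κ • ψ ∈ {v : V | ∀ q : P, T v q ≤ 0} := by
    intro q
    have := huh q
    simp only [map_sub, Pi.sub_apply, hTψ q]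
    split
    · next h => subst h; simp [hκ]; linarith
    · simpa
  have h1 := hVI _ hmem₁
  have h2 := hVI _ hmem₂
  simp only [add_sub_cancel_left, sub_sub_cancel_left, map_smul, map_neg, smul_eq_mul] at h1 h2
  have e1 : L ψ ≤ a uh ψ := le_of_mul_le_mul_left (by linarith) hκpos
  have e2 : a uh ψ ≤ L ψ := le_of_mul_le_mul_left (by linarith) hκpos
  linarith
end
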